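/- Let (G, D, w) be an integer-weighted MDMTSP instance with d = |D| depots such that for every proper nonempty U ⊆ V(G) there exist u ∈ U and v ∉ U with w(u,v) ≤ L. Then the Multi-Depot Christofides-Serdyukov algorithm (minimum CSF F plus minimum matching M on odd-degree nodes of F) returns a tour of weight at most (3/2)·OPT + L·(d − 1). -/

import Mathlib

open scoped Classical

noncomputable def deg {V : Type*} (E : Multiset (Sym2 V)) (v : V) : ℕ :=
  (E.filter (fun e => v ∈ e)).card

def Connects {V : Type*} (E : Multiset (Sym2 V)) : V → V → Prop :=
  Relation.ReflTransGen (fun a b => s(a, b) ∈ E)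

noncomputable def mweight {V : Type*} (w : Sym2 V → ℝ) (E : Multiset (Sym2 V)) : ℝ :=
  (E.map w).sum

def IsMetric {V : Type*} (w : Sym2 V → ℝ) : Prop :=
  (∀ e, 0 ≤ w e) ∧ ∀ a b c : V, w s(a, c) ≤ w s(a, b) + w s(b, c)

def IsTour {V : Type*} (D : Finset V) (T : Multiset (Sym2 V)) : Prop :=
  (∀ e ∈ T, ¬ Sym2.IsDiag e) ∧ (∀ v, Even (deg T v)) ∧ ∀ v, ∃ d ∈ D, Connects T v d

def IsCSF {V : Type*} (D : Finset V) (F : Finset (Sym2 V)) : Prop :=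
  (∀ e ∈ F, ¬ Sym2.IsDiag e) ∧
  (SimpleGraph.fromEdgeSet (↑F : Set (Sym2 V))).IsAcyclic ∧
  ∀ v, ∃ d ∈ D, Connects F.val v d

def IsPM {V : Type*} (U : Finset V) (M : Multiset (Sym2 V)) : Prop :=
  (∀ e ∈ M, ¬ Sym2.IsDiag e) ∧ ∀ v, deg M v = if v ∈ U then 1 else 0

def IsRPPSol {V : Type*} (R J : Multiset (Sym2 V)) : Prop :=
  (∀ e ∈ J, ¬ Sym2.IsDiag e) ∧ (∀ v, Even (deg (R + J) v)) ∧
  ∀ u v : V, (∃ e ∈ R + J, u ∈ e) → (∃ e ∈ R + J, v ∈ e) → Connects (R + J) u v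
section Basics
variable {V : Type*}

lemma deg_add (E E' : Multiset (Sym2 V)) (v : V) : deg (E + E') v = deg E v + deg E' v := by
  simp [deg, Multiset.filter_add]

lemma deg_cons (e : Sym2 V) (E : Multiset (Sym2 V)) (v : V) :
    deg (e ::ₘ E) v = (if v ∈ e then 1 else 0) + deg E v := by
  by_cases h : v ∈ e <;> simp [deg, Multiset.filter_cons, h] <;> omega

lemma deg_zero (v : V) : deg (0 : Multiset (Sym2 V)) v = 0 := rfl

lemma deg_erase {e : Sym2 V} {E : Multiset (Sym2 V)} (he : e ∈ E) (v : V) :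
    deg (E.erase e) v + (if v ∈ e then 1 else 0) = deg E v := by
  conv_rhs => rw [← Multiset.cons_erase he]
  rw [deg_cons]; ring

lemma mweight_zero (w : Sym2 V → ℝ) : mweight w 0 = 0 := rfl

lemma mweight_add (w : Sym2 V → ℝ) (E E' : Multiset (Sym2 V)) :
    mweight w (E + E') = mweight w E + mweight w E' := by
  simp [mweight]

lemma mweight_cons (w : Sym2 V → ℝ) (e : Sym2 V) (E : Multiset (Sym2 V)) :
    mweight w (e ::ₘ E) = w e + mweight w E := by
  simp [mweight]

lemma mweight_nonneg {w : Sym2 V → ℝ} (hw : ∀ e, 0 ≤ w e) (E : Multiset (Sym2 V)) :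
    0 ≤ mweight w E := by
  refine Multiset.sum_nonneg ?_
  intro x hx; rcases Multiset.mem_map.1 hx with ⟨e, _, rfl⟩; exact hw e

lemma mweight_mono {w : Sym2 V → ℝ} (hw : ∀ e, 0 ≤ w e) {E E' : Multiset (Sym2 V)}
    (h : E ≤ E') : mweight w E ≤ mweight w E' := by
  rcases Multiset.le_iff_exists_add.1 h with ⟨R, rfl⟩
  rw [mweight_add]
  have := mweight_nonneg hw R
  linarith

lemma connects_mono {E E' : Multiset (Sym2 V)} (h : ∀ e : Sym2 V, e ∈ E → e ∈ E')
    {x y : V} (hc : Connects E x y) : Connects E' x y := by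
  induction hc with
  | refl => exact Relation.ReflTransGen.refl
  | tail _ hs ih => exact Relation.ReflTransGen.tail ih (h _ hs)

lemma connects_symm {E : Multiset (Sym2 V)} {x y : V} (hc : Connects E x y) :
    Connects E y x := by
  induction hc with
  | refl => exact Relation.ReflTransGen.refl
  | tail _ hs ih =>
    refine Relation.ReflTransGen.trans (Relation.ReflTransGen.single ?_) ih
    rwa [Sym2.eq_swap]

lemma connects_trans {E : Multiset (Sym2 V)} {x y z : V} (h1 : Connects E x y)
    (h2 : Connects E y z) : Connects E x z := Relation.ReflTransGen.trans h1 h2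

end Basics

section Walks
variable {V : Type*}

def wE : List V → Multiset (Sym2 V)
  | [] => 0
  | [_] => 0
  | a :: b :: t => s(a, b) ::ₘ wE (b :: t)

@[simp] lemma wE_nil : wE ([] : List V) = 0 := rfl
@[simp] lemma wE_single (a : V) : wE [a] = 0 := rfl
@[simp] lemma wE_cons_cons (a b : V) (t : List V) :
    wE (a :: b :: t) = s(a, b) ::ₘ wE (b :: t) := rfl

lemma mem_of_mem_wE {l : List V} {e : Sym2 V} (he : e ∈ wE l) {x : V} (hx : x ∈ e) :
    x ∈ l := by
  induction l with
  | nil => simp [wE] at he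
  | cons a t ih =>
    match t, he with
    | [], he => simp [wE] at he
    | b :: t, he =>
      rw [wE_cons_cons, Multiset.mem_cons] at he
      rcases he with rfl | he
      · rcases Sym2.mem_iff.1 hx with rfl | rfl <;> simp
      · have := ih he
        simp at this ⊢
        tauto

lemma wE_append {l1 : List V} {v : V} (h1 : l1.getLast? = some v) (l2 : List V) :
    wE (l1 ++ l2) = wE l1 + wE (v :: l2) := by
  induction l1 with
  | nil => simp at h1
  | cons a t ih =>
    match t with
    | [] =>
      simp at h1; subst h1; cases l2 <;> simp [wE]
    | b :: t =>
      have hl : (b :: t).getLast? = some v := by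
        rw [List.getLast?_cons_cons] at h1; exact h1
      have := ih hl
      simp only [List.cons_append, wE_cons_cons] at *
      rw [this]
      simp [Multiset.cons_add]

lemma wE_le_nondiag {l : List V} {E : Multiset (Sym2 V)} (h : wE l ≤ E)
    (hnd : ∀ e ∈ E, ¬ Sym2.IsDiag e) : ∀ e ∈ wE l, ¬ Sym2.IsDiag e :=
  fun e he => hnd e (Multiset.mem_of_le h he)

/-- parity of degrees of a walk's edge multiset -/
lemma deg_wE_parity {l : List V} {a b : V} (hh : l.head? = some a) (hl : l.getLast? = some b)
    (hnd : ∀ e ∈ wE l, ¬ Sym2.IsDiag e) (v : V) :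
    Even (deg (wE l) v + (if v = a then 1 else 0) + (if v = b then 1 else 0)) := by
  induction l generalizing a with
  | nil => simp at hh
  | cons x t ih =>
    have hxa : x = a := by simpa using hh
    subst hxa
    match t with
    | [] =>
      simp at hl; subst hl
      simp [deg_zero]
    | c :: t =>
      have hh2 : (c :: t).head? = some c := rfl
      have hl2 : (c :: t).getLast? = some b := by
        rw [List.getLast?_cons_cons] at hl; exact hl
      have hnd2 : ∀ e ∈ wE (c :: t), ¬ Sym2.IsDiag e := by
        intro e he; exact hnd e (by rw [wE_cons_cons]; exact Multiset.mem_cons_of_mem he)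
      have hac : x ≠ c := by
        intro h
        exact hnd s(x, c) (by simp) (by simp [h])
      have IH := ih hh2 hl2 hnd2
      rw [wE_cons_cons, deg_cons]
      have hind : (if v ∈ s(x, c) then 1 else 0) =
          (if v = x then 1 else 0) + (if v = c then 1 else 0) := by
        rcases eq_or_ne v x with rfl | h1 <;> rcases eq_or_ne v c with rfl | h2 <;>
          simp [Sym2.mem_iff, *] at *
      rw [hind]
      rw [Nat.even_iff] at IH ⊢
      omega

lemma wE_closed_even {l : List V} {a : V} (hh : l.head? = some a) (hl : l.getLast? = some a)
    (hnd : ∀ e ∈ wE l, ¬ Sym2.IsDiag e) (v : V) : Even (deg (wE l) v) := by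
  have h := deg_wE_parity hh hl hnd v
  rw [Nat.even_iff] at h ⊢
  rcases eq_or_ne v a with rfl | hv
  · omega
  · simp [hv] at h; omega

end Walks

section Splice
variable {V : Type*}

lemma getLast?_append_right {l l' : List V} (h : l' ≠ []) :
    (l ++ l').getLast? = l'.getLast? := by
  rw [List.getLast?_append]
  obtain ⟨x, hx⟩ := Option.isSome_iff_exists.1 (List.getLast?_isSome.2 h)
  rw [hx]; rfl

lemma splice {l m : List V} {a v : V}
    (hlh : l.head? = some a) (hll : l.getLast? = some a)
    (hmh : m.head? = some v) (hml : m.getLast? = some v)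
    (hv : v ∈ l) :
    ∃ l2 : List V, l2.head? = some a ∧ l2.getLast? = some a ∧
      wE l2 = wE l + wE m ∧ ∀ x, x ∈ l2 ↔ (x ∈ l ∨ x ∈ m) := by
  obtain ⟨p, q, rfl⟩ := List.append_of_mem hv
  obtain ⟨m', rfl⟩ : ∃ m', m = v :: m' := by
    cases m with
    | nil => simp at hmh
    | cons y m' =>
      simp at hmh; subst hmh; exact ⟨m', rfl⟩
  have h2 : wE (v :: (m' ++ q)) = wE (v :: m') + wE (v :: q) := by
    have := wE_append hml q
    simpa using this
  refine ⟨p ++ v :: (m' ++ q), ?_, ?_, ?_, ?_⟩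
  · cases p with
    | nil => simpa using hlh
    | cons ph p' =>
      rw [List.head?_append_of_ne_nil _ (by simp)] at hlh ⊢; exact hlh
  · cases q with
    | nil =>
      have hva : v = a := by
        have e2 : p ++ v :: ([] : List V) = p ++ [v] := rfl
        rw [e2, List.getLast?_concat] at hll
        exact Option.some_injective _ hll
      have e1 : p ++ v :: (m' ++ ([] : List V)) = p ++ (v :: m') := by simp
      rw [e1, getLast?_append_right (by simp), hml, hva]
    | cons z q' =>
      have e1 : p ++ v :: (m' ++ z :: q') = (p ++ v :: m') ++ (z :: q') := by simp
      have e2 : p ++ v :: z :: q' = (p ++ [v]) ++ (z :: q') := by simp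
      rw [e2, getLast?_append_right (by simp)] at hll
      rw [e1, getLast?_append_right (by simp)]
      exact hll
  · cases p with
    | nil =>
      simp only [List.nil_append, h2]
      exact add_comm _ _
    | cons ph p' =>
      obtain ⟨pl, hpl⟩ : ∃ pl, (ph :: p').getLast? = some pl :=
        Option.isSome_iff_exists.1 (List.getLast?_isSome.2 (by simp))
      rw [show (ph :: p') ++ v :: (m' ++ q) = (ph :: p') ++ (v :: (m' ++ q)) from rfl,
          wE_append hpl]
      rw [show (ph :: p') ++ v :: q = (ph :: p') ++ (v :: q) from rfl, wE_append hpl]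
      have h1 : wE (pl :: v :: (m' ++ q)) = s(pl, v) ::ₘ wE (v :: (m' ++ q)) := rfl
      have h3 : wE (pl :: v :: q) = s(pl, v) ::ₘ wE (v :: q) := rfl
      rw [h1, h2, h3, ← Multiset.singleton_add, ← Multiset.singleton_add]
      abel
  · intro x; simp; tauto
end Splice

section Trails
variable {V : Type*}

lemma head?_mem {l : List V} {u : V} (h : l.head? = some u) : u ∈ l := by
  cases l with
  | nil => simp at h
  | cons x t => simp at h; simp [h]

lemma deg_exists_edge {E : Multiset (Sym2 V)} {x : V} (h : 0 < deg E x) :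
    ∃ e ∈ E, x ∈ e := by
  unfold deg at h
  rw [Multiset.card_pos_iff_exists_mem] at h
  obtain ⟨e, he⟩ := h
  rw [Multiset.mem_filter] at he
  exact ⟨e, he.1, he.2⟩

lemma ind_mem_sym2 (x y v : V) (hvx : v = x ∨ v = y) :
    (if v ∈ s(x, y) then 1 else 0) = 1 := by
  rcases hvx with rfl | rfl <;> simp [Sym2.mem_iff]

lemma ind_not_mem_sym2 (x y v : V) (hvx : v ≠ x) (hvy : v ≠ y) :
    (if v ∈ s(x, y) then 1 else 0) = 0 := by
  simp [Sym2.mem_iff, hvx, hvy]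

lemma trail_exists : ∀ (n : ℕ) (E : Multiset (Sym2 V)), E.card ≤ n →
    (∀ e ∈ E, ¬ Sym2.IsDiag e) → ∀ x a : V, x ≠ a →
    (∀ v, Odd (deg E v) ↔ (v = x ∨ v = a)) →
    ∃ l : List V, l.head? = some x ∧ l.getLast? = some a ∧ wE l ≤ E ∧
      (∀ v, Even (deg (E - wE l) v)) := by
  intro n
  induction n with
  | zero =>
    intro E hc _ x a _ hodd
    have hE : E = 0 := by rw [← Multiset.card_eq_zero]; omega
    subst hE
    have h0 := (hodd x).2 (Or.inl rfl)
    simp [deg_zero] at h0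
  | succ n IH =>
    intro E hc hnd x a hxa hodd
    have hx : 0 < deg E x := by
      have h0 := (hodd x).2 (Or.inl rfl)
      rcases Nat.eq_zero_or_pos (deg E x) with h | h
      · rw [h] at h0; simp at h0
      · exact h
    obtain ⟨e, he, hxe⟩ := deg_exists_edge hx
    obtain ⟨y, rfl⟩ := Sym2.mem_iff_exists.1 hxe
    have hyx : y ≠ x := fun h => hnd _ he (by simp [h])
    have hdege : ∀ v, deg (E.erase s(x, y)) v + (if v ∈ s(x, y) then 1 else 0) = deg E v :=
      deg_erase he
    by_cases hya : y = a
    · subst hya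
      refine ⟨[x, y], rfl, rfl, ?_, ?_⟩
      · show (s(x, y) ::ₘ 0) ≤ E
        simpa using he
      · intro v
        have h2 : E - wE [x, y] = E.erase s(x, y) := by
          show E - (s(x, y) ::ₘ 0) = _
          simp [Multiset.sub_cons]
        rw [h2]
        have h1 := hdege v
        have hv := hodd v
        rw [Nat.even_iff]
        rcases eq_or_ne v x with rfl | hvx
        · rw [ind_mem_sym2 _ _ _ (Or.inl rfl)] at h1
          have : Odd (deg E v) := hv.2 (Or.inl rfl)
          rw [Nat.odd_iff] at this; omega
        · rcases eq_or_ne v y with rfl | hvy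
          · rw [ind_mem_sym2 _ _ _ (Or.inr rfl)] at h1
            have : Odd (deg E v) := hv.2 (Or.inr rfl)
            rw [Nat.odd_iff] at this; omega
          · rw [ind_not_mem_sym2 _ _ _ hvx hvy] at h1
            have : ¬ Odd (deg E v) := fun h => by rcases hv.1 h with h' | h' <;> simp_all
            rw [Nat.odd_iff] at this; omega
    · have hodd1 : ∀ v, Odd (deg (E.erase s(x, y)) v) ↔ (v = y ∨ v = a) := by
        intro v
        have h1 := hdege v
        have hv := hodd v
        rw [Nat.odd_iff]
        rcases eq_or_ne v x with rfl | hvx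
        · rw [ind_mem_sym2 _ _ _ (Or.inl rfl)] at h1
          have h3 : Odd (deg E v) := hv.2 (Or.inl rfl)
          rw [Nat.odd_iff] at h3
          have hvy : ¬ v = y := fun h => hyx h.symm
          have hva : ¬ v = a := hxa
          simp only [hvy, hva, or_self, iff_false]
          omega
        · rcases eq_or_ne v y with rfl | hvy
          · rw [ind_mem_sym2 _ _ _ (Or.inr rfl)] at h1
            have h3 : ¬ Odd (deg E v) := fun h => by
              rcases hv.1 h with h' | h' <;> simp_all
            rw [Nat.odd_iff] at h3
            simp only [hya, or_false, iff_true]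
            omega
          · rw [ind_not_mem_sym2 _ _ _ hvx hvy] at h1
            simp only [hvy, false_or]
            rcases eq_or_ne v a with rfl | hva
            · have h3 : Odd (deg E v) := hv.2 (Or.inr rfl)
              rw [Nat.odd_iff] at h3
              simp only [iff_true]
              omega
            · have h3 : ¬ Odd (deg E v) := fun h => by
                rcases hv.1 h with h' | h' <;> simp_all
              rw [Nat.odd_iff] at h3
              simp only [hva, iff_false]
              omega
      have hcard1 : (E.erase s(x, y)).card ≤ n := by
        have hEpos : 0 < Multiset.card E := by
          rw [Multiset.card_pos]; exact fun h => by simp [h] at he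
        rw [Multiset.card_erase_of_mem he, Nat.pred_eq_sub_one]
        omega
      have hnd1 : ∀ e ∈ E.erase s(x, y), ¬ Sym2.IsDiag e :=
        fun e he' => hnd e (Multiset.mem_of_mem_erase he')
      obtain ⟨l', hl'h, hl'l, hl'le, hl'ev⟩ := IH _ hcard1 hnd1 y a hya hodd1
      obtain ⟨t, rfl⟩ : ∃ t, l' = y :: t := by
        cases l' with
        | nil => simp at hl'h
        | cons z t => simp at hl'h; exact ⟨t, by rw [hl'h]⟩
      refine ⟨x :: y :: t, rfl, ?_, ?_, ?_⟩
      · rw [List.getLast?_cons_cons]; exact hl'l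
      · rw [wE_cons_cons]
        calc s(x, y) ::ₘ wE (y :: t) ≤ s(x, y) ::ₘ E.erase s(x, y) :=
              Multiset.cons_le_cons _ hl'le
          _ = E := Multiset.cons_erase he
      · intro v
        rw [wE_cons_cons, Multiset.sub_cons]
        exact hl'ev v

lemma closed_trail {E : Multiset (Sym2 V)} (hnd : ∀ e ∈ E, ¬ Sym2.IsDiag e)
    (hev : ∀ v, Even (deg E v)) {a : V} (ha : ∃ e ∈ E, a ∈ e) :
    ∃ l : List V, l.head? = some a ∧ l.getLast? = some a ∧ wE l ≤ E ∧ wE l ≠ 0 ∧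
      ∀ v, Even (deg (E - wE l) v) := by
  obtain ⟨e, he, hae⟩ := ha
  obtain ⟨y, rfl⟩ := Sym2.mem_iff_exists.1 hae
  have hya : y ≠ a := fun h => hnd _ he (by simp [h])
  have hdege := deg_erase he
  have hodd1 : ∀ v, Odd (deg (E.erase s(a, y)) v) ↔ (v = y ∨ v = a) := by
    intro v
    have h1 := hdege v
    have hv := hev v
    rw [Nat.even_iff] at hv
    rw [Nat.odd_iff]
    rcases eq_or_ne v a with rfl | hva
    · rw [ind_mem_sym2 _ _ _ (Or.inl rfl)] at h1
      have hvy : ¬ v = y := fun h => hya h.symm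
      simp only [hvy, or_true, iff_true]
      omega
    · rcases eq_or_ne v y with rfl | hvy
      · rw [ind_mem_sym2 _ _ _ (Or.inr rfl)] at h1
        simp only [hva, or_false, iff_true]
        omega
      · rw [ind_not_mem_sym2 _ _ _ hva hvy] at h1
        simp only [hvy, hva, or_self, iff_false]
        omega
  have hnd1 : ∀ e ∈ E.erase s(a, y), ¬ Sym2.IsDiag e :=
    fun e he' => hnd e (Multiset.mem_of_mem_erase he')
  obtain ⟨l', hl'h, hl'l, hl'le, hl'ev⟩ :=
    trail_exists (E.erase s(a, y)).card _ le_rfl hnd1 y a hya hodd1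
  obtain ⟨t, rfl⟩ : ∃ t, l' = y :: t := by
    cases l' with
    | nil => simp at hl'h
    | cons z t => simp at hl'h; exact ⟨t, by rw [hl'h]⟩
  refine ⟨a :: y :: t, rfl, ?_, ?_, ?_, ?_⟩
  · rw [List.getLast?_cons_cons]; exact hl'l
  · rw [wE_cons_cons]
    calc s(a, y) ::ₘ wE (y :: t) ≤ s(a, y) ::ₘ E.erase s(a, y) :=
          Multiset.cons_le_cons _ hl'le
      _ = E := Multiset.cons_erase he
  · simp
  · intro v
    rw [wE_cons_cons, Multiset.sub_cons]
    exact hl'ev v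
end Trails

section MaxCircuit
variable {V : Type*}

lemma max_circuit : ∀ (n : ℕ) (E : Multiset (Sym2 V)), E.card ≤ n →
    (∀ e ∈ E, ¬ Sym2.IsDiag e) → (∀ v, Even (deg E v)) → ∀ a : V,
    ∃ (l : List V) (R : Multiset (Sym2 V)), l.head? = some a ∧ l.getLast? = some a ∧
      wE l + R = E ∧ ∀ e ∈ R, ∀ x ∈ e, x ∉ l := by
  intro n
  induction n with
  | zero =>
    intro E hc _ _ a
    have hE : E = 0 := by rw [← Multiset.card_eq_zero]; omega
    exact ⟨[a], 0, rfl, rfl, by simp [hE], by simp⟩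
  | succ n IH =>
    intro E hc hnd hev a
    by_cases ha : ∃ e ∈ E, a ∈ e
    · obtain ⟨lC, h1, h2, h3, h4, h5⟩ := closed_trail hnd hev ha
      have hsum0 : wE lC + (E - wE lC) = E := add_tsub_cancel_of_le h3
      have hR0card : (E - wE lC).card ≤ n := by
        have hc1 := congrArg Multiset.card hsum0
        rw [Multiset.card_add] at hc1
        have hc2 : 0 < (wE lC).card := Multiset.card_pos.2 h4
        omega
      have inner : ∀ (vs : List V) (R : Multiset (Sym2 V)) (l : List V),
          R.card ≤ n → (∀ e ∈ R, ¬ Sym2.IsDiag e) → (∀ v, Even (deg R v)) →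
          l.head? = some a → l.getLast? = some a →
          (∀ e ∈ R, ∀ x ∈ e, x ∈ l → x ∈ vs) →
          ∃ l2 R2, l2.head? = some a ∧ l2.getLast? = some a ∧
            wE l2 + R2 = wE l + R ∧ ∀ e ∈ R2, ∀ x ∈ e, x ∉ l2 := by
        intro vs
        induction vs with
        | nil =>
          intro R l _ _ _ hh hl hinv
          exact ⟨l, R, hh, hl, rfl,
            fun e he x hx hxl => absurd (hinv e he x hx hxl) List.not_mem_nil⟩
        | cons u vs ihv =>
          intro R l hcard hndR hevR hh hl hinv
          obtain ⟨lu, Ru, huh, hul, husum, hunt⟩ := IH R hcard hndR hevR u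
          by_cases hu : u ∈ l
          · obtain ⟨l2, g1, g2, g3, g4⟩ := splice hh hl huh hul hu
            have hRu_le : Ru ≤ R := by
              rw [← husum]; exact Multiset.le_add_left _ _
            have hwElu_le : wE lu ≤ R := by
              rw [← husum]; exact Multiset.le_add_right _ _
            have hndlu : ∀ e ∈ wE lu, ¬ Sym2.IsDiag e :=
              fun e he' => hndR e (Multiset.mem_of_le hwElu_le he')
            have hevRu : ∀ v, Even (deg Ru v) := by
              intro v
              have hdeq : deg (wE lu) v + deg Ru v = deg R v := by
                rw [← deg_add, husum]
              have he1 := wE_closed_even huh hul hndlu v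
              have he2 := hevR v
              rw [Nat.even_iff] at he1 he2 ⊢
              omega
            have hcard2 : Ru.card ≤ n := le_trans (Multiset.card_le_card hRu_le) hcard
            have hndRu : ∀ e ∈ Ru, ¬ Sym2.IsDiag e :=
              fun e he' => hndR e (Multiset.mem_of_le hRu_le he')
            have hinv2 : ∀ e ∈ Ru, ∀ x ∈ e, x ∈ l2 → x ∈ vs := by
              intro e he' x hx hxl2
              rcases (g4 x).1 hxl2 with hxl | hxlu
              · rcases List.mem_cons.1 (hinv e (Multiset.mem_of_le hRu_le he') x hx hxl)
                  with rfl | hxvs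
                · exact absurd (head?_mem huh) (hunt e he' x hx)
                · exact hxvs
              · exact absurd hxlu (hunt e he' x hx)
            obtain ⟨l3, R3, k1, k2, k3, k4⟩ := ihv Ru l2 hcard2 hndRu hevRu g1 g2 hinv2
            refine ⟨l3, R3, k1, k2, ?_, k4⟩
            rw [k3, g3, ← husum, add_assoc]
          · refine ihv R l hcard hndR hevR hh hl ?_
            intro e he' x hx hxl
            rcases List.mem_cons.1 (hinv e he' x hx hxl) with rfl | hxvs
            · exact absurd hxl hu
            · exact hxvs
      obtain ⟨l2, R2, k1, k2, k3, k4⟩ :=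
        inner lC (E - wE lC) lC hR0card
          (fun e he' => hnd e (Multiset.mem_of_le (tsub_le_self) he'))
          h5 h1 h2 (fun e he' x hx hxl => hxl)
      refine ⟨l2, R2, k1, k2, ?_, k4⟩
      rw [k3, hsum0]
    · refine ⟨[a], E, rfl, rfl, by simp, ?_⟩
      intro e he x hx hxl
      simp at hxl
      exact ha ⟨e, he, hxl ▸ hx⟩
end MaxCircuit

section Euler
variable {V : Type*}

lemma euler_circuit {E : Multiset (Sym2 V)} (hnd : ∀ e ∈ E, ¬ Sym2.IsDiag e)
    (hev : ∀ v, Even (deg E v)) (hconn : ∀ x y : V, Connects E x y) (a : V) :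
    ∃ l : List V, l.head? = some a ∧ l.getLast? = some a ∧ wE l = E := by
  obtain ⟨l, R, h1, h2, h3, h4⟩ := max_circuit E.card E le_rfl hnd hev a
  have key : ∀ z : V, Connects E z a → (∃ e ∈ R, z ∈ e) → False := by
    intro z hc
    refine Relation.ReflTransGen.head_induction_on hc ?_ ?_
    · rintro ⟨e, he, hae⟩
      exact h4 e he a hae (head?_mem h1)
    · intro p c hstep hrest ih
      rintro ⟨e, he, hpe⟩
      by_cases hpl : p ∈ l
      · exact h4 e he p hpe hpl
      · have hmem : s(p, c) ∈ wE l + R := by rw [h3]; exact hstep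
        rcases Multiset.mem_add.1 hmem with hin | hin
        · exact absurd (mem_of_mem_wE hin (by simp)) hpl
        · exact ih ⟨s(p, c), hin, by simp⟩
  have hR : R = 0 := by
    rw [Multiset.eq_zero_iff_forall_notMem]
    intro e he
    induction e using Sym2.ind with
    | _ p q => exact key p (hconn p a) ⟨s(p, q), he, by simp⟩
  exact ⟨l, h1, h2, by rw [← h3, hR, add_zero]⟩

variable {w : Sym2 V → ℝ}

lemma mweight_wE_cons (w : Sym2 V → ℝ) (a b : V) (t : List V) :
    mweight w (wE (a :: b :: t)) = w s(a, b) + mweight w (wE (b :: t)) := by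
  rw [wE_cons_cons, mweight_cons]

lemma pc_le (hw : ∀ e, 0 ≤ w e) (htri : ∀ a b c : V, w s(a, c) ≤ w s(a, b) + w s(b, c)) :
    ∀ {us l : List V}, List.Sublist us l → ∀ {u y : V}, us.head? = some u → l.head? = some y →
    ∀ x : V, w s(x, u) + mweight w (wE us) ≤ w s(x, y) + mweight w (wE l) := by
  intro us l h
  induction h with
  | slnil => intro u y hu _ _; simp at hu
  | @cons us l' b hsub ih =>
    intro u y hu hy x
    have hb : b = y := by simpa using hy
    subst hb
    have hus : us ≠ [] := by rintro rfl; simp at hu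
    have hl' : l' ≠ [] := by
      rintro rfl
      exact hus (List.sublist_nil.1 hsub)
    obtain ⟨c, t, rfl⟩ : ∃ c t, l' = c :: t := by
      cases l' with
      | nil => exact absurd rfl hl'
      | cons c t => exact ⟨c, t, rfl⟩
    have IH := ih hu rfl x
    have htr : w s(x, c) ≤ w s(x, b) + w s(b, c) := htri x b c
    have : mweight w (wE (b :: c :: t)) = w s(b, c) + mweight w (wE (c :: t)) :=
      mweight_wE_cons w b c t
    rw [this]
    linarith
  | @cons_cons us l' b hsub ih =>
    intro u y hu hy x
    have hb : b = y := by simpa using hy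
    have hu' : b = u := by simpa using hu
    subst hb; subst hu'
    have hmain : mweight w (wE (b :: us)) ≤ mweight w (wE (b :: l')) := by
      cases us with
      | nil =>
        simpa [mweight_zero] using mweight_nonneg hw (wE (b :: l'))
      | cons u' t =>
        have hl' : l' ≠ [] := by
          rintro rfl
          simpa using List.sublist_nil.1 hsub
        obtain ⟨c, t', rfl⟩ : ∃ c t', l' = c :: t' := by
          cases l' with
          | nil => exact absurd rfl hl'
          | cons c t' => exact ⟨c, t', rfl⟩
        have IH := ih (u := u') (y := c) rfl rfl b
        rw [mweight_wE_cons, mweight_wE_cons]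
        linarith
    linarith

def m1 : List V → Multiset (Sym2 V)
  | a :: b :: t => s(a, b) ::ₘ m1 t
  | _ => 0

@[simp] lemma m1_nil : m1 ([] : List V) = 0 := rfl
@[simp] lemma m1_single (a : V) : m1 [a] = 0 := rfl
@[simp] lemma m1_cons_cons (a b : V) (t : List V) : m1 (a :: b :: t) = s(a, b) ::ₘ m1 t := rfl

lemma m1_split : ∀ (n : ℕ) (u : V) (t : List V), (u :: t).length ≤ n →
    Even (u :: t).length → ∀ z : V,
    wE ((u :: t) ++ [z]) = m1 (u :: t) + m1 (t ++ [z]) := by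
  intro n
  induction n with
  | zero => intro u t h; simp at h
  | succ n IHn =>
    intro u t hlen heven z
    match t with
    | [] => simp at heven
    | [b] => simp [wE, Multiset.singleton_add]
    | b :: c :: t' =>
      have hlen' : (c :: t').length ≤ n := by simp at hlen ⊢; omega
      have heven' : Even (c :: t').length := by
        simp [Nat.even_add_one, Nat.even_iff, Nat.odd_iff] at heven ⊢
        omega
      have IH := IHn c t' hlen' heven' z
      simp only [List.cons_append] at IH ⊢
      rw [wE_cons_cons, wE_cons_cons, IH, m1_cons_cons, m1_cons_cons]
      rw [← Multiset.singleton_add, ← Multiset.singleton_add, ← Multiset.singleton_add,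
        ← Multiset.singleton_add]
      abel

lemma m1_deg : ∀ (n : ℕ) (vs : List V), vs.length ≤ n → vs.Nodup → Even vs.length →
    ∀ v, deg (m1 vs) v = if v ∈ vs then 1 else 0 := by
  intro n
  induction n with
  | zero =>
    intro vs h _ _ v
    obtain rfl : vs = [] := by cases vs <;> simp_all
    simp [deg_zero]
  | succ n IHn =>
    intro vs hlen hnd heven v
    match vs with
    | [] => simp [deg_zero]
    | [b] => simp at heven
    | a :: b :: t =>
      have hlen' : t.length ≤ n := by simp at hlen; omega
      have hnd' : t.Nodup := by simp at hnd; exact hnd.2.2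
      have heven' : Even t.length := by
        simp [Nat.even_add_one, Nat.even_iff, Nat.odd_iff] at heven ⊢
        omega
      have IH := IHn t hlen' hnd' heven' v
      rw [m1_cons_cons, deg_cons, IH]
      have hab : a ≠ b := by simp at hnd; tauto
      have hat : a ∉ t := by simp at hnd; tauto
      have hbt : b ∉ t := by simp at hnd; tauto
      rcases eq_or_ne v a with rfl | hva
      · rw [ind_mem_sym2 _ _ _ (Or.inl rfl)]
        simp [hat]
      · rcases eq_or_ne v b with rfl | hvb
        · rw [ind_mem_sym2 _ _ _ (Or.inr rfl)]
          simp [hbt]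
        · rw [ind_not_mem_sym2 _ _ _ hva hvb]
          simp [hva, hvb]

lemma m1_nondiag : ∀ (n : ℕ) (vs : List V), vs.length ≤ n → vs.Nodup →
    ∀ e ∈ m1 vs, ¬ Sym2.IsDiag e := by
  intro n
  induction n with
  | zero =>
    intro vs h _ e he
    obtain rfl : vs = [] := by cases vs <;> simp_all
    simp at he
  | succ n IHn =>
    intro vs hlen hnd e he
    match vs with
    | [] => simp at he
    | [b] => simp [m1] at he
    | a :: b :: t =>
      rw [m1_cons_cons, Multiset.mem_cons] at he
      rcases he with rfl | he
      · have hab : a ≠ b := by simp at hnd; tauto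
        simp [hab]
      · exact IHn t (by simp at hlen; omega) (by simp at hnd; tauto) e he

lemma deg_sum_handshake [Fintype V] (M : Multiset (Sym2 V)) (hnd : ∀ e ∈ M, ¬ Sym2.IsDiag e) :
    ∑ v : V, deg M v = 2 * Multiset.card M := by
  classical
  induction M using Multiset.induction_on with
  | empty => simp [deg_zero]
  | cons e M IH =>
    have hnd' : ∀ e' ∈ M, ¬ Sym2.IsDiag e' := fun e' he' => hnd e' (Multiset.mem_cons_of_mem he')
    have he : ¬ e.IsDiag := hnd e (Multiset.mem_cons_self e M)
    have hsum : ∑ v : V, (if v ∈ e then 1 else 0) = 2 := by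
      induction e using Sym2.ind with
      | _ p q =>
        have hpq : p ≠ q := by simpa using he
        have hrw : ∀ v : V, (if v ∈ s(p, q) then (1 : ℕ) else 0)
            = if v ∈ ({p, q} : Finset V) then 1 else 0 := by
          intro v; simp [Sym2.mem_iff]
        rw [Finset.sum_congr rfl (fun v _ => hrw v), Finset.sum_ite_mem, Finset.univ_inter]
        rw [Finset.sum_const]
        simp [hpq]
    have hsplit : ∑ v : V, deg (e ::ₘ M) v
        = (∑ v : V, (if v ∈ e then 1 else 0)) + ∑ v : V, deg M v := by
      rw [← Finset.sum_add_distrib]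
      exact Finset.sum_congr rfl (fun v _ => deg_cons e M v)
    rw [hsplit, hsum, IH hnd', Multiset.card_cons]
    ring
end Euler

section Components
variable {V : Type*} [Fintype V]

noncomputable def vidx {V : Type*} [Fintype V] (v : V) : ℕ := (Fintype.equivFin V v : ℕ)

lemma vidx_inj {a b : V} (h : vidx a = vidx b) : a = b := by
  have := Fin.val_injective h
  exact (Fintype.equivFin V).injective this

def IsMinRep (E : Multiset (Sym2 V)) (v : V) : Prop :=
  ∀ u, Connects E v u → vidx v ≤ vidx u

noncomputable def reps (E : Multiset (Sym2 V)) : Finset V :=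
  Finset.univ.filter (IsMinRep E)

lemma exists_minRep (E : Multiset (Sym2 V)) (v : V) :
    ∃ r, Connects E v r ∧ IsMinRep E r := by
  classical
  obtain ⟨r, hr, hmin⟩ := Finset.exists_min_image
    (Finset.univ.filter (fun u => Connects E v u)) vidx
    ⟨v, Finset.mem_filter.2 ⟨Finset.mem_univ v, Relation.ReflTransGen.refl⟩⟩
  rw [Finset.mem_filter] at hr
  refine ⟨r, hr.2, ?_⟩
  intro u hu
  exact hmin u (Finset.mem_filter.2 ⟨Finset.mem_univ u, connects_trans hr.2 hu⟩)

lemma reps_subset {E E' : Multiset (Sym2 V)} (h : ∀ e : Sym2 V, e ∈ E → e ∈ E') :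
    reps E' ⊆ reps E := by
  intro r hr
  rw [reps, Finset.mem_filter] at hr ⊢
  exact ⟨Finset.mem_univ r, fun u hu => hr.2 u (connects_mono h hu)⟩

lemma merge_lt (E : Multiset (Sym2 V)) {u v : V} (h : ¬ Connects E u v) :
    (reps (s(u, v) ::ₘ s(u, v) ::ₘ E)).card < (reps E).card := by
  classical
  set E' := s(u, v) ::ₘ s(u, v) ::ₘ E with hE'
  have hext : ∀ e : Sym2 V, e ∈ E → e ∈ E' := fun e he =>
    Multiset.mem_cons_of_mem (Multiset.mem_cons_of_mem he)
  have hsub : reps E' ⊆ reps E := reps_subset hext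
  obtain ⟨ru, hru, hruM⟩ := exists_minRep E u
  obtain ⟨rv, hrv, hrvM⟩ := exists_minRep E v
  have hrne : ru ≠ rv := by
    rintro rfl
    exact h (connects_trans hru (connects_symm hrv))
  have hconn' : Connects E' ru rv := by
    refine connects_trans (connects_symm (connects_mono hext hru)) ?_
    refine connects_trans (Relation.ReflTransGen.single ?_) (connects_mono hext hrv)
    exact Multiset.mem_cons_self _ _
  have hmemE : ∀ r, IsMinRep E r → r ∈ reps E := fun r hr =>
    Finset.mem_filter.2 ⟨Finset.mem_univ r, hr⟩
  have key : ∃ r ∈ reps E, r ∉ reps E' := by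
    rcases lt_or_gt_of_ne (fun hh : vidx ru = vidx rv => hrne (vidx_inj hh)) with hlt | hgt
    · refine ⟨rv, hmemE rv hrvM, ?_⟩
      intro hmem
      have := (Finset.mem_filter.1 hmem).2 ru (connects_symm hconn')
      omega
    · refine ⟨ru, hmemE ru hruM, ?_⟩
      intro hmem
      have := (Finset.mem_filter.1 hmem).2 rv hconn'
      omega
  obtain ⟨r, hr1, hr2⟩ := key
  exact Finset.card_lt_card ((Finset.ssubset_iff_of_subset hsub).2 ⟨r, hr1, hr2⟩)

lemma reps_card_le_depots (D : Finset V) (E : Multiset (Sym2 V))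
    (hdep : ∀ x : V, ∃ d ∈ D, Connects E x d) : (reps E).card ≤ D.card := by
  classical
  have hspec : ∀ r : V, (Classical.choose (hdep r)) ∈ D ∧
      Connects E r (Classical.choose (hdep r)) := fun r => by
    obtain ⟨h1, h2⟩ := Classical.choose_spec (hdep r)
    exact ⟨h1, h2⟩
  refine Finset.card_le_card_of_injOn (fun r => Classical.choose (hdep r))
    (fun r _ => (hspec r).1) ?_
  intro r1 h1 r2 h2 heq
  have h1' : IsMinRep E r1 := by
    have h := Finset.mem_coe.1 h1
    rw [reps, Finset.mem_filter] at h
    exact h.2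
  have h2' : IsMinRep E r2 := by
    have h := Finset.mem_coe.1 h2
    rw [reps, Finset.mem_filter] at h
    exact h.2
  have hcc : Connects E r1 r2 := by
    refine connects_trans (hspec r1).2 ?_
    have heq' : Classical.choose (hdep r1) = Classical.choose (hdep r2) := heq
    rw [heq']
    exact connects_symm (hspec r2).2
  have h12 := h1' r2 hcc
  have h21 := h2' r1 (connects_symm hcc)
  exact vidx_inj (le_antisymm h12 h21)

lemma exists_connector (wz : Sym2 V → ℤ) (L : ℤ)
    (hL : ∀ U : Finset V, U.Nonempty → U ≠ Finset.univ →
      ∃ u ∈ U, ∃ v ∈ Finset.univ \ U, wz s(u, v) ≤ L) :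
    ∀ (n : ℕ) (E : Multiset (Sym2 V)), (reps E).card ≤ n →
    ∃ J : Multiset (Sym2 V), Multiset.card J ≤ (reps E).card - 1 ∧
      (∀ e ∈ J, ¬ Sym2.IsDiag e ∧ wz e ≤ L) ∧
      ∀ x y : V, Connects (E + (J + J)) x y := by
  intro n
  induction n with
  | zero =>
    intro E hc
    refine ⟨0, by simp, by simp, ?_⟩
    intro x y
    obtain ⟨r, hr, hrM⟩ := exists_minRep E x
    have : r ∈ reps E := Finset.mem_filter.2 ⟨Finset.mem_univ r, hrM⟩
    have := Finset.card_pos.2 ⟨r, this⟩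
    omega
  | succ n IH =>
    intro E hc
    by_cases hconn : ∀ x y : V, Connects E x y
    · exact ⟨0, by simp, by simp, fun x y => by simpa using hconn x y⟩
    · push_neg at hconn
      obtain ⟨x, y, hxy⟩ := hconn
      classical
      set U0 : Finset V := Finset.univ.filter (fun u => Connects E x u) with hU0
      have hxU0 : x ∈ U0 := Finset.mem_filter.2 ⟨Finset.mem_univ x, Relation.ReflTransGen.refl⟩
      have hyU0 : y ∉ U0 := fun hy => hxy (Finset.mem_filter.1 hy).2
      have hne : U0.Nonempty := ⟨x, hxU0⟩
      have hnequniv : U0 ≠ Finset.univ := fun hu => hyU0 (hu ▸ Finset.mem_univ y)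
      obtain ⟨u, hu, v, hv, hwuv⟩ := hL U0 hne hnequniv
      have hcu : Connects E x u := (Finset.mem_filter.1 hu).2
      have hcv : ¬ Connects E x v := fun hcv =>
        (Finset.mem_sdiff.1 hv).2 (Finset.mem_filter.2 ⟨Finset.mem_univ v, hcv⟩)
      have hnuv : ¬ Connects E u v := fun hcon => hcv (connects_trans hcu hcon)
      have huvne : u ≠ v := fun hh => hnuv (hh ▸ Relation.ReflTransGen.refl)
      have hlt := merge_lt E hnuv
      set E' := s(u, v) ::ₘ s(u, v) ::ₘ E with hE'
      have hc' : (reps E').card ≤ n := by omega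
      have hpos : 0 < (reps E').card := by
        obtain ⟨r, _, hrM⟩ := exists_minRep E' x
        exact Finset.card_pos.2 ⟨r, Finset.mem_filter.2 ⟨Finset.mem_univ r, hrM⟩⟩
      obtain ⟨J', hJ'card, hJ'prop, hJ'conn⟩ := IH E' hc'
      refine ⟨s(u, v) ::ₘ J', ?_, ?_, ?_⟩
      · rw [Multiset.card_cons]
        omega
      · intro e he
        rcases Multiset.mem_cons.1 he with rfl | he
        · exact ⟨by simpa using huvne, hwuv⟩
        · exact hJ'prop e he
      · intro a b
        have hms : E + ((s(u, v) ::ₘ J') + (s(u, v) ::ₘ J')) = E' + (J' + J') := by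
          rw [hE']
          simp only [← Multiset.singleton_add]
          abel
        rw [hms]
        exact hJ'conn a b
end Components

section CSF
variable {V : Type*} [Fintype V]

lemma walk_connects_erase {S : Finset (Sym2 V)} {e0 : Sym2 V} :
    ∀ {x y : V} (q : (SimpleGraph.fromEdgeSet (↑S : Set (Sym2 V))).Walk x y),
      e0 ∉ q.edges → Connects (S.erase e0).val x y := by
  intro x y q
  induction q with
  | nil => intro _; exact Relation.ReflTransGen.refl
  | @cons a b c hadj p ih =>
    intro hne
    rw [SimpleGraph.Walk.edges_cons, List.mem_cons] at hne
    push_neg at hne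
    rw [SimpleGraph.fromEdgeSet_adj] at hadj
    refine Relation.ReflTransGen.head ?_ (ih hne.2)
    refine Finset.mem_val.mpr (Finset.mem_erase.2 ⟨?_, by simpa using hadj.1⟩)
    exact fun hh => hne.1 hh.symm

lemma exists_csf_in_tour (D : Finset V) (T : Multiset (Sym2 V))
    (hnd : ∀ e ∈ T, ¬ Sym2.IsDiag e) (hconn : ∀ v : V, ∃ d ∈ D, Connects T v d) :
    ∃ F₂ : Finset (Sym2 V), IsCSF D F₂ ∧ F₂.val ≤ T := by
  classical
  have hP0 : ∀ v : V, ∃ d ∈ D, Connects T.toFinset.val v d := by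
    intro v
    obtain ⟨d, hd, hc⟩ := hconn v
    exact ⟨d, hd, connects_mono (fun e he => by
      rw [Finset.mem_val, Multiset.mem_toFinset]; exact he) hc⟩
  obtain ⟨S, hS, hSmin⟩ := Finset.exists_min_image
    ((T.toFinset.powerset).filter (fun S => ∀ v : V, ∃ d ∈ D, Connects S.val v d))
    Finset.card
    ⟨T.toFinset, Finset.mem_filter.2 ⟨Finset.mem_powerset.2 (subset_refl _), hP0⟩⟩
  rw [Finset.mem_filter, Finset.mem_powerset] at hS
  obtain ⟨hSsub, hSconn⟩ := hS
  have hSnd : ∀ e ∈ S, ¬ Sym2.IsDiag e := fun e he =>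
    hnd e (Multiset.mem_toFinset.1 (hSsub he))
  refine ⟨S, ⟨hSnd, ?_, hSconn⟩, ?_⟩
  · by_contra hcyc
    unfold SimpleGraph.IsAcyclic at hcyc
    push_neg at hcyc
    obtain ⟨v, c, hc⟩ := hcyc
    cases c with
    | nil => exact hc.ne_nil rfl
    | @cons _ b _ hadj q =>
      have hedge : s(v, b) ∈ S := by
        rw [SimpleGraph.fromEdgeSet_adj] at hadj
        simpa using hadj.1
      have hnodup := hc.edges_nodup
      rw [SimpleGraph.Walk.edges_cons] at hnodup
      have hnotin : s(v, b) ∉ q.edges := (List.nodup_cons.1 hnodup).1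
      have hdetour : Connects (S.erase s(v, b)).val b v := walk_connects_erase q hnotin
      have hrepl : ∀ z dep : V, Connects S.val z dep →
          Connects (S.erase s(v, b)).val z dep := by
        intro z dep hzd
        induction hzd with
        | refl => exact Relation.ReflTransGen.refl
        | @tail p q' hstep hedge' ih =>
          refine connects_trans ih ?_
          by_cases heq : s(p, q') = s(v, b)
          · rw [Sym2.eq_iff] at heq
            rcases heq with ⟨rfl, rfl⟩ | ⟨rfl, rfl⟩
            · exact connects_symm hdetour
            · exact hdetour
          · exact Relation.ReflTransGen.single
              (Finset.mem_val.mpr (Finset.mem_erase.2 ⟨heq, Finset.mem_val.mp hedge'⟩))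
      have hmem2 : S.erase s(v, b) ∈
          (T.toFinset.powerset).filter (fun S => ∀ v : V, ∃ d ∈ D, Connects S.val v d) := by
        refine Finset.mem_filter.2
          ⟨Finset.mem_powerset.2 (subset_trans (Finset.erase_subset _ _) hSsub), ?_⟩
        intro z
        obtain ⟨dep, hdep, hcz⟩ := hSconn z
        exact ⟨dep, hdep, hrepl z dep hcz⟩
      have hge := hSmin _ hmem2
      have hlt := Finset.card_erase_lt_of_mem hedge
      omega
  · calc (S.val : Multiset (Sym2 V)) ≤ T.toFinset.val := Finset.val_le_iff.2 hSsub
      _ = T.dedup := Multiset.toFinset_val T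
      _ ≤ T := Multiset.dedup_le T
end CSF

section Rotate
variable {V : Type*}

lemma sublist_drop_concat {us r' : List V} {x : V} (h : List.Sublist us (r' ++ [x]))
    (hx : x ∉ us) : List.Sublist us r' := by
  rw [List.sublist_append_iff] at h
  obtain ⟨l₁, l₂, rfl, h1, h2⟩ := h
  cases l₂ with
  | nil => simpa using h1
  | cons y t =>
    exfalso
    have hy : y ∈ [x] := h2.subset List.mem_cons_self
    simp at hy
    exact hx (by simp [hy])

lemma rotate_closed {p r : List V} {a u1 : V}
    (hlh : (p ++ u1 :: r).head? = some a) (hll : (p ++ u1 :: r).getLast? = some a)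
    {us'' : List V} (hsub : List.Sublist us'' r) (hnotin : u1 ∉ us'') (hne : us'' ≠ []) :
    ∃ lrot : List V, lrot.head? = some u1 ∧ lrot.getLast? = some u1 ∧
      wE lrot = wE (p ++ u1 :: r) ∧ List.Sublist ((u1 :: us'') ++ [u1]) lrot := by
  cases p with
  | nil =>
    obtain rfl : u1 = a := by simpa using hlh
    have hrne : r ≠ [] := by
      rintro rfl
      exact hne (List.sublist_nil.1 hsub)
    have hrl : r.getLast? = some u1 := by
      rw [show ([] ++ u1 :: r : List V) = [u1] ++ r from rfl,
        getLast?_append_right hrne] at hll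
      exact hll
    have hrep : r = r.dropLast ++ [u1] := by
      conv_lhs => rw [← List.dropLast_append_getLast hrne]
      rw [List.getLast?_eq_getLast hrne] at hrl
      simp at hrl
      rw [hrl]
    have hsub' : List.Sublist us'' r.dropLast := by
      refine sublist_drop_concat ?_ hnotin
      rw [← hrep]; exact hsub
    refine ⟨[] ++ u1 :: r, hlh, hll, rfl, ?_⟩
    simp only [List.nil_append, List.cons_append]
    refine List.Sublist.cons₂ u1 ?_
    rw [hrep]
    exact List.Sublist.append hsub' (List.Sublist.refl [u1])
  | cons ph p' =>
    have hpa : ph = a := by simpa using hlh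
    subst hpa
    have hglast : (u1 :: r).getLast? = some ph := by
      rw [getLast?_append_right (by simp : (u1 :: r : List V) ≠ [])] at hll
      exact hll
    refine ⟨(u1 :: r) ++ (p' ++ [u1]), by simp, ?_, ?_, ?_⟩
    · rw [getLast?_append_right (by simp : (p' ++ [u1] : List V) ≠ [])]
      exact List.getLast?_concat
    · rw [wE_append hglast]
      have e1 : ph :: (p' ++ [u1]) = (ph :: p') ++ [u1] := rfl
      rw [e1]
      have e2 : (ph :: p') ++ u1 :: r = ((ph :: p') ++ [u1]) ++ r := by simp
      rw [e2, wE_append (List.getLast?_concat : ((ph :: p') ++ [u1]).getLast? = some u1)]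
      exact add_comm _ _
    · have e3 : (u1 :: r) ++ (p' ++ [u1]) = u1 :: (r ++ (p' ++ [u1])) := rfl
      rw [e3, List.cons_append]
      refine List.Sublist.cons₂ u1 ?_
      exact List.Sublist.append hsub (List.sublist_append_right p' [u1])
end Rotate

theorem stmt12 {V : Type*} [Fintype V] (D : Finset V) (hD : D.Nonempty)
    (wz : Sym2 V → ℤ) (hw0 : ∀ e, 0 ≤ wz e)
    (htri : ∀ a b c : V, wz s(a, c) ≤ wz s(a, b) + wz s(b, c))
    (L : ℤ) (d : ℕ) (hd : D.card = d)
    (hL : ∀ U : Finset V, U.Nonempty → U ≠ Finset.univ →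
      ∃ u ∈ U, ∃ v ∈ Finset.univ \ U, wz s(u, v) ≤ L)
    (F : Finset (Sym2 V)) (hF : IsCSF D F)
    (hFmin : ∀ F₂, IsCSF D F₂ →
      mweight (fun e => (wz e : ℝ)) F.val ≤ mweight (fun e => (wz e : ℝ)) F₂.val)
    (U : Finset V) (hU : ∀ v, v ∈ U ↔ Odd (deg F.val v))
    (M : Multiset (Sym2 V)) (hM : IsPM U M)
    (hMmin : ∀ M', IsPM U M' →
      mweight (fun e => (wz e : ℝ)) M ≤ mweight (fun e => (wz e : ℝ)) M')
    (T : Multiset (Sym2 V)) (hT : IsTour D T)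
    (hTmin : ∀ T', IsTour D T' →
      mweight (fun e => (wz e : ℝ)) T ≤ mweight (fun e => (wz e : ℝ)) T') :
    IsTour D (F.val + M) ∧
    mweight (fun e => (wz e : ℝ)) (F.val + M) ≤
      3 / 2 * mweight (fun e => (wz e : ℝ)) T + (L : ℝ) * ((d : ℝ) - 1) := by
  classical
  obtain ⟨hTnd, hTev, hTconn⟩ := hT
  have hwR : ∀ e : Sym2 V, 0 ≤ (fun e => (wz e : ℝ)) e := fun e => by
    simp only []
    exact_mod_cast hw0 e
  have htriR : ∀ a b c : V, (fun e => (wz e : ℝ)) s(a, c) ≤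
      (fun e => (wz e : ℝ)) s(a, b) + (fun e => (wz e : ℝ)) s(b, c) := fun a b c => by
    simp only []
    exact_mod_cast htri a b c
  have hd1 : 1 ≤ d := hd ▸ Finset.card_pos.2 hD
  have part1 : IsTour D (F.val + M) := by
    refine ⟨?_, ?_, ?_⟩
    · intro e he
      rcases Multiset.mem_add.1 he with h | h
      · exact hF.1 e h
      · exact hM.1 e h
    · intro v
      rw [deg_add]
      have hMv := hM.2 v
      by_cases hv : v ∈ U
      · have hodd : Odd (deg F.val v) := (hU v).1 hv
        rw [hMv, if_pos hv, Nat.even_iff]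
        rw [Nat.odd_iff] at hodd
        omega
      · have hnodd : ¬ Odd (deg F.val v) := fun h => hv ((hU v).2 h)
        rw [Nat.odd_iff] at hnodd
        rw [hMv, if_neg hv, Nat.even_iff]
        omega
    · intro v
      obtain ⟨dep, hdep, hc⟩ := hF.2.2 v
      exact ⟨dep, hdep, connects_mono (fun e he => Multiset.mem_add.2 (Or.inl he)) hc⟩
  obtain ⟨F₂, hF₂, hF₂le⟩ := exists_csf_in_tour D T hTnd hTconn
  have hwF : mweight (fun e => (wz e : ℝ)) F.val ≤ mweight (fun e => (wz e : ℝ)) T :=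
    le_trans (hFmin F₂ hF₂) (mweight_mono hwR hF₂le)
  have hreps : (reps T).card ≤ d := hd ▸ reps_card_le_depots D T hTconn
  obtain ⟨J, hJcard, hJprop, hJconn⟩ := exists_connector wz L hL (reps T).card T le_rfl
  have hJd : Multiset.card J ≤ d - 1 := le_trans hJcard (by omega)
  set E : Multiset (Sym2 V) := T + (J + J) with hEdef
  have hEnd : ∀ e ∈ E, ¬ Sym2.IsDiag e := by
    intro e he
    rw [hEdef] at he
    rcases Multiset.mem_add.1 he with h | h
    · exact hTnd e h
    · rcases Multiset.mem_add.1 h with h' | h' <;> exact (hJprop e h').1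
  have hEev : ∀ v, Even (deg E v) := by
    intro v
    rw [hEdef, deg_add, deg_add]
    have hT' := hTev v
    rw [Nat.even_iff] at hT' ⊢
    omega
  have hLsign : d = 1 ∨ (0 : ℤ) ≤ L := by
    rcases eq_or_lt_of_le hd1 with h1 | h2
    · exact Or.inl h1.symm
    · right
      have h2' : 1 < D.card := by omega
      obtain ⟨d1, hd1', d2, hd2', hne⟩ := Finset.one_lt_card.1 h2'
      have hneuniv : ({d1} : Finset V) ≠ Finset.univ := by
        intro h
        have hmem : d2 ∈ ({d1} : Finset V) := h ▸ Finset.mem_univ d2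
        have hd21 : d2 = d1 := by simpa using hmem
        exact hne hd21.symm
      obtain ⟨u, hu, v, hv, hw⟩ := hL {d1} ⟨d1, by simp⟩ hneuniv
      exact le_trans (hw0 _) hw
  have hLd0 : (0 : ℝ) ≤ (L : ℝ) * ((d : ℝ) - 1) := by
    rcases hLsign with h | h
    · simp [h]
    · apply mul_nonneg (by exact_mod_cast h)
      have hcast : (1 : ℝ) ≤ (d : ℝ) := by exact_mod_cast hd1
      linarith
  have hJw : mweight (fun e => (wz e : ℝ)) J ≤ (L : ℝ) * ((d : ℝ) - 1) := by
    rcases hLsign with h | h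
    · have hJ0 : Multiset.card J = 0 := by omega
      rw [Multiset.card_eq_zero] at hJ0
      rw [hJ0, h]
      simp [mweight]
    · have hbound : ∀ x ∈ J.map (fun e => ((wz e : ℝ))), x ≤ (L : ℝ) := by
        intro x hx
        obtain ⟨e, he, rfl⟩ := Multiset.mem_map.1 hx
        exact_mod_cast (hJprop e he).2
      have hsum := Multiset.sum_le_card_nsmul _ _ hbound
      rw [Multiset.card_map] at hsum
      have hcardle : ((Multiset.card J : ℕ) : ℝ) ≤ (d : ℝ) - 1 := by
        have hcast : ((Multiset.card J : ℕ) : ℝ) ≤ ((d - 1 : ℕ) : ℝ) := by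
          exact_mod_cast hJd
        rw [Nat.cast_sub hd1] at hcast
        simpa using hcast
      calc mweight (fun e => (wz e : ℝ)) J = (J.map (fun e => ((wz e : ℝ)))).sum := rfl
        _ ≤ (Multiset.card J) • (L : ℝ) := hsum
        _ = (Multiset.card J : ℝ) * L := nsmul_eq_mul _ _
        _ ≤ ((d : ℝ) - 1) * L := mul_le_mul_of_nonneg_right hcardle (by exact_mod_cast h)
        _ = (L : ℝ) * ((d : ℝ) - 1) := mul_comm _ _
  have hwE : mweight (fun e => (wz e : ℝ)) E =
      mweight (fun e => (wz e : ℝ)) T + 2 * mweight (fun e => (wz e : ℝ)) J := by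
    rw [hEdef, mweight_add, mweight_add]
    ring
  have hwM : mweight (fun e => (wz e : ℝ)) M ≤
      mweight (fun e => (wz e : ℝ)) T / 2 + (L : ℝ) * ((d : ℝ) - 1) := by
    by_cases hUe : U = ∅
    · have hPM0 : IsPM U 0 :=
        ⟨fun e he => absurd he (Multiset.notMem_zero e), fun v => by simp [deg_zero, hUe]⟩
      have hle0 := hMmin 0 hPM0
      have h0 : mweight (fun e => (wz e : ℝ)) (0 : Multiset (Sym2 V)) = 0 := rfl
      have hTnn := mweight_nonneg hwR T
      rw [h0] at hle0
      linarith
    · obtain ⟨a0, ha0⟩ := hD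
      obtain ⟨l, hlh, hll, hlE⟩ := euler_circuit hEnd hEev hJconn a0
      have hUl : ∀ v ∈ U, v ∈ l := by
        intro v hv
        rcases Relation.ReflTransGen.cases_head (hJconn v a0) with heq | ⟨c, hvc, _⟩
        · exact heq ▸ head?_mem hlh
        · exact mem_of_mem_wE (by rw [hlE]; exact hvc) (by simp)
      set us : List V := (l.filter (fun v => decide (v ∈ U))).dedup with husdef
      have hussub : List.Sublist us l := (List.dedup_sublist _).trans List.filter_sublist
      have husnodup : us.Nodup := List.nodup_dedup _
      have hmemus : ∀ v, v ∈ us ↔ v ∈ U := by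
        intro v
        rw [husdef, List.mem_dedup, List.mem_filter]
        constructor
        · rintro ⟨_, h⟩; simpa using h
        · intro h; exact ⟨hUl v h, by simpa using h⟩
      have husfin : us.toFinset = U := by
        ext v
        rw [List.mem_toFinset]
        exact hmemus v
      have huslen : us.length = U.card := by
        rw [← husfin, List.toFinset_card_of_nodup husnodup]
      have hUeven : Even U.card := by
        have h1 := deg_sum_handshake M hM.1
        have h2 : ∑ v : V, deg M v = ∑ v : V, (if v ∈ U then 1 else 0) :=
          Finset.sum_congr rfl (fun v _ => hM.2 v)
        have h3 : ∑ v : V, (if v ∈ U then 1 else 0) = U.card := by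
          rw [Finset.sum_ite_mem, Finset.univ_inter, Finset.sum_const, smul_eq_mul, mul_one]
        rw [h2, h3] at h1
        exact ⟨Multiset.card M, by omega⟩
      have hUpos : 0 < U.card := Finset.card_pos.2 (Finset.nonempty_iff_ne_empty.2 hUe)
      have hlen2 : 2 ≤ us.length := by
        rw [huslen]
        rcases hUeven with ⟨k, hk⟩
        omega
      obtain ⟨u1, us'', hus⟩ : ∃ u1 us'', us = u1 :: us'' := by
        cases h : us with
        | nil => rw [h] at hlen2; simp at hlen2
        | cons u1 t => exact ⟨u1, t, rfl⟩
      have hu1ne : u1 ∉ us'' := by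
        have hn := husnodup
        rw [hus] at hn
        exact (List.nodup_cons.1 hn).1
      have husne : us'' ≠ [] := by
        rintro rfl
        rw [hus] at hlen2
        simp at hlen2
      have hsubl : List.Sublist (u1 :: us'') l := hus ▸ hussub
      rw [List.cons_sublist_iff] at hsubl
      obtain ⟨r₁, r₂, hldecomp, hu1r1, hsubr2⟩ := hsubl
      obtain ⟨p, m, hr1⟩ := List.append_of_mem hu1r1
      have hldec2 : l = p ++ u1 :: (m ++ r₂) := by
        rw [hldecomp, hr1]
        simp
      have hsubmr : List.Sublist us'' (m ++ r₂) :=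
        hsubr2.trans (List.sublist_append_right m r₂)
      have hlh' : (p ++ u1 :: (m ++ r₂)).head? = some a0 := hldec2 ▸ hlh
      have hll' : (p ++ u1 :: (m ++ r₂)).getLast? = some a0 := hldec2 ▸ hll
      obtain ⟨lrot, hrh, hrl, hrwE, hrsub⟩ := rotate_closed hlh' hll' hsubmr hu1ne husne
      have hwErot : wE lrot = E := by
        rw [hrwE, ← hldec2, hlE]
      have hPC := pc_le (w := fun e => (wz e : ℝ)) hwR htriR hrsub
        (by simp : ((u1 :: us'') ++ [u1]).head? = some u1) hrh u1
      have hCus : mweight (fun e => (wz e : ℝ)) (wE ((u1 :: us'') ++ [u1])) ≤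
          mweight (fun e => (wz e : ℝ)) E := by
        rw [← hwErot]
        linarith
      have huseven : Even (u1 :: us'').length := by
        rw [← hus, huslen]
        exact hUeven
      have hsplit := m1_split (u1 :: us'').length u1 us'' le_rfl huseven u1
      have husn2 : (u1 :: us'').Nodup := hus ▸ husnodup
      have hperm : (us'' ++ [u1]).Perm (u1 :: us'') := List.perm_append_singleton u1 us''
      have husn3 : (us'' ++ [u1]).Nodup := hperm.nodup_iff.2 husn2
      have huseven3 : Even (us'' ++ [u1]).length := by
        have : (us'' ++ [u1]).length = (u1 :: us'').length := by simp
        rw [this]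
        exact huseven
      have hmemus' : ∀ v, v ∈ (u1 :: us'') ↔ v ∈ U := fun v => hus ▸ hmemus v
      have hPM1 : IsPM U (m1 (u1 :: us'')) := by
        refine ⟨m1_nondiag (u1 :: us'').length _ le_rfl husn2, ?_⟩
        intro v
        rw [m1_deg (u1 :: us'').length _ le_rfl husn2 huseven v]
        by_cases hv : v ∈ U
        · rw [if_pos ((hmemus' v).2 hv), if_pos hv]
        · rw [if_neg (fun hh => hv ((hmemus' v).1 hh)), if_neg hv]
      have hPM2 : IsPM U (m1 (us'' ++ [u1])) := by
        refine ⟨m1_nondiag (us'' ++ [u1]).length _ le_rfl husn3, ?_⟩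
        intro v
        rw [m1_deg (us'' ++ [u1]).length _ le_rfl husn3 huseven3 v]
        by_cases hv : v ∈ U
        · rw [if_pos (hperm.mem_iff.2 ((hmemus' v).2 hv)), if_pos hv]
        · rw [if_neg (fun hh => hv ((hmemus' v).1 (hperm.mem_iff.1 hh))), if_neg hv]
      have hm1 := hMmin _ hPM1
      have hm2 := hMmin _ hPM2
      have hsumM : mweight (fun e => (wz e : ℝ)) (m1 (u1 :: us'')) +
          mweight (fun e => (wz e : ℝ)) (m1 (us'' ++ [u1])) =
          mweight (fun e => (wz e : ℝ)) (wE ((u1 :: us'') ++ [u1])) := by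
        rw [hsplit, mweight_add]
      rw [hwE] at hCus
      linarith
  refine ⟨part1, ?_⟩
  rw [mweight_add]
  linarith
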